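/- arXiv:2206.08409 — 2 statements merged into one kernel-verified Lean document; each statement's English description precedes it below -/
import Mathlib

section
/- (Theorem 2, safety-critical control via control barrier functions) Let n, m ∈ ℕ, let f : ℝⁿ → ℝⁿ and g : ℝⁿ → L(ℝᵐ, ℝⁿ) be locally Lipschitz continuous, let k : ℝⁿ → ℝᵐ be locally Lipschitz continuous, let h : ℝⁿ → ℝ be continuously differentiable, and let α : ℝ → ℝ be continuous, strictly increasing with α(0) = 0. Suppose that for all p ∈ ℝⁿ, Dh(p)(f(p) + g(p)(k(p))) ≥ -α(h(p)). Let x : ℝ → ℝⁿ be a solution of the closed-loop system ẋ(t) = f(x(t)) + g(x(t))(k(x(t))) for all t ≥ 0. If h(x(0)) ≥ 0, then h(x(t)) ≥ 0 for all t ≥ 0; that is, the set S = {p ∈ ℝⁿ : h(p) ≥ 0} is forward invariant under the closed-loop dynamics. -/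
/-! Along a trajectory, `y t = h (x t)` has derivative `≥ -α (y t)`, which is strictly positive
whenever `y t < 0`. If `y` became negative at some time `b`, take the last time `s < b` with
`y s ≥ 0`; the mean value theorem on `[s, b]` gives a point where `y < 0` yet `y' < 0`. -/

open Set

theorem exists_last_nonneg_of_continuousOn {y : ℝ → ℝ} {a b : ℝ} (hab : a ≤ b)
    (hy : ContinuousOn y (Icc a b)) (hya : 0 ≤ y a) :
    ∃ s ∈ Icc a b, 0 ≤ y s ∧ ∀ t ∈ Ioc s b, y t < 0 := by
  have hclosed : IsClosed (Icc a b ∩ y ⁻¹' Ici 0) :=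
    hy.preimage_isClosed_of_isClosed isClosed_Icc isClosed_Ici
  obtain ⟨s, ⟨hs, hys⟩, hmax⟩ :=
    (isCompact_Icc.of_isClosed_subset hclosed inter_subset_left).exists_isGreatest
      ⟨a, ⟨left_mem_Icc.2 hab, hya⟩⟩
  refine ⟨s, hs, hys, fun t ht => ?_⟩
  by_contra! hyt
  exact (hmax ⟨⟨hs.1.trans ht.1.le, ht.2⟩, hyt⟩).not_gt ht.1

theorem nonneg_of_hasDerivAt_of_deriv_pos_of_neg {y y' : ℝ → ℝ} {a : ℝ}
    (hy : ∀ t ≥ a, HasDerivAt y (y' t) t) (hya : 0 ≤ y a)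
    (hpos : ∀ t ≥ a, y t < 0 → 0 < y' t) :
    ∀ t ≥ a, 0 ≤ y t := by
  intro b hab
  by_contra! hyb
  have hcont : ContinuousOn y (Icc a b) := fun t ht =>
    (hy t ht.1).continuousAt.continuousWithinAt
  obtain ⟨s, hs, hys, hneg⟩ := exists_last_nonneg_of_continuousOn hab hcont hya
  have hsb : s < b := lt_of_le_of_ne hs.2 (by rintro rfl; exact hys.not_gt hyb)
  obtain ⟨c, hc, hslope⟩ := exists_hasDerivAt_eq_slope y y' hsb
    (hcont.mono (Icc_subset_Icc_left hs.1)) fun t ht => hy t (hs.1.trans ht.1.le)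
  have hslope_neg : (y b - y s) / (b - s) < 0 :=
    div_neg_of_neg_of_pos (by linarith) (sub_pos.2 hsb)
  have hc_pos := hpos c (hs.1.trans hc.1.le) (hneg c ⟨hc.1, hc.2.le⟩)
  linarith

theorem statement3_general (n m : ℕ)
    (f : EuclideanSpace ℝ (Fin n) → EuclideanSpace ℝ (Fin n))
    (g : EuclideanSpace ℝ (Fin n) → (EuclideanSpace ℝ (Fin m) →L[ℝ] EuclideanSpace ℝ (Fin n)))
    (k : EuclideanSpace ℝ (Fin n) → EuclideanSpace ℝ (Fin m))
    (h : EuclideanSpace ℝ (Fin n) → ℝ) (α : ℝ → ℝ)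
    (hh : ContDiff ℝ 1 h)
    (hα_mono : StrictMono α) (hα0 : α 0 = 0)
    (hsafe : ∀ p : EuclideanSpace ℝ (Fin n), fderiv ℝ h p (f p + g p (k p)) ≥ -α (h p))
    (x : ℝ → EuclideanSpace ℝ (Fin n))
    (hx : ∀ t ≥ (0 : ℝ), HasDerivAt x (f (x t) + g (x t) (k (x t))) t)
    (h0 : h (x 0) ≥ 0) :
    ∀ t ≥ (0 : ℝ), h (x t) ≥ 0 := by
  refine nonneg_of_hasDerivAt_of_deriv_pos_of_neg
    (y := fun t => h (x t)) (y' := fun t => fderiv ℝ h (x t) (f (x t) + g (x t) (k (x t))))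
    (fun t ht => ((hh.differentiable one_ne_zero (x t)).hasFDerivAt).comp_hasDerivAt t (hx t ht))
    h0 fun t _ hyt => ?_
  have hα_neg : α (h (x t)) < 0 := hα0 ▸ hα_mono hyt
  linarith [hsafe (x t)]

/-- Theorem 2: safety-critical control via control barrier functions. For the affine
control system `ẋ = f(x) + g(x) u` with locally Lipschitz feedback `u = k(x)`
satisfying `Dh(p)(f(p) + g(p)(k(p))) ≥ -α (h p)` for all `p`, the 0-superlevel set of
`h` is forward invariant under the closed-loop dynamics. -/
theorem statement3 (n m : ℕ)
    (f : EuclideanSpace ℝ (Fin n) → EuclideanSpace ℝ (Fin n))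
    (g : EuclideanSpace ℝ (Fin n) → (EuclideanSpace ℝ (Fin m) →L[ℝ] EuclideanSpace ℝ (Fin n)))
    (k : EuclideanSpace ℝ (Fin n) → EuclideanSpace ℝ (Fin m))
    (h : EuclideanSpace ℝ (Fin n) → ℝ) (α : ℝ → ℝ)
    (hf : LocallyLipschitz f) (hg : LocallyLipschitz g) (hk : LocallyLipschitz k)
    (hh : ContDiff ℝ 1 h)
    (hα_cont : Continuous α) (hα_mono : StrictMono α) (hα0 : α 0 = 0)
    (hsafe : ∀ p : EuclideanSpace ℝ (Fin n), fderiv ℝ h p (f p + g p (k p)) ≥ -α (h p))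
    (x : ℝ → EuclideanSpace ℝ (Fin n))
    (hx : ∀ t ≥ (0 : ℝ), HasDerivAt x (f (x t) + g (x t) (k (x t))) t)
    (h0 : h (x 0) ≥ 0) :
    ∀ t ≥ (0 : ℝ), h (x t) ≥ 0 :=
  statement3_general n m f g k h α hh hα_mono hα0 hsafe x hx h0
end

section
/- (Theorem 4, chain-rule form: time derivative of a functional along a solution) Let E be a real Banach space, τ > 0, and let x : ℝ → E be continuously differentiable. Let 𝓗 : C([-τ,0], E) → ℝ be Fréchet differentiable, where C([-τ,0], E) carries the supremum norm. Then for every t ∈ ℝ, the function t ↦ 𝓗(x_t) is differentiable at t, and its derivative equals D𝓗(x_t)(ẋ_t), the Fréchet derivative of 𝓗 at x_t applied to the continuous function ẋ_t : θ ↦ x'(t+θ). -/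
/-!
The curve `t ↦ x_t` in `C([-τ,0], E)` is differentiable with derivative `ẋ_t`, after which the
theorem is the chain rule. For each `θ`, the mean value inequality gives
`‖x (s + θ) - x (t + θ) - (s - t) • x' (t + θ)‖ ≤ |s - t| · sup_{u ∈ [t,s]} ‖ẋ_u - ẋ_t‖`,
uniformly in `θ`, and the right-hand side is `o(|s - t|)` because `u ↦ ẋ_u` is continuous
(currying a continuous function on `ℝ × [-τ,0]`).
-/

/-- The history segment `x_t`. -/
noncomputable def histSegment {E : Type*} [NormedAddCommGroup E]
    (τ : ℝ) (x : ℝ → E) (hx : Continuous x) (t : ℝ) :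
    C(Set.Icc (-τ) (0 : ℝ), E) :=
  ⟨fun θ => x (t + θ), hx.comp (continuous_const.add continuous_subtype_val)⟩

open Set Metric

theorem Convex.norm_image_sub_sub_smul_le_of_norm_hasDerivWithin_sub_le
    {E : Type*} [NormedAddCommGroup E] [NormedSpace ℝ E]
    {f f' : ℝ → E} {s : Set ℝ} {a b C : ℝ} {c : E}
    (hf : ∀ u ∈ s, HasDerivWithinAt f (f' u) s u) (bound : ∀ u ∈ s, ‖f' u - c‖ ≤ C)
    (hs : Convex ℝ s) (ha : a ∈ s) (hb : b ∈ s) :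
    ‖f b - f a - (b - a) • c‖ ≤ C * ‖b - a‖ := by
  have hg : ∀ u ∈ s, HasDerivWithinAt (fun u => f u - u • c) (f' u - c) s u := fun u hu => by
    simpa using (hf u hu).fun_sub ((hasDerivWithinAt_id u s).smul_const c)
  calc ‖f b - f a - (b - a) • c‖ = ‖(f b - b • c) - (f a - a • c)‖ := by
        rw [sub_smul]; congr 1; abel
    _ ≤ C * ‖b - a‖ := hs.norm_image_sub_le_of_norm_hasDerivWithin_le hg bound ha hb

theorem continuous_histSegment {E : Type*} [NormedAddCommGroup E] (τ : ℝ) {x : ℝ → E}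
    (hx : Continuous x) : Continuous (histSegment τ x hx) :=
  (ContinuousMap.curry ⟨fun p : ℝ × Icc (-τ) (0 : ℝ) => x (p.1 + p.2), by fun_prop⟩).continuous

theorem hasDerivAt_histSegment {E : Type*} [NormedAddCommGroup E] [NormedSpace ℝ E] (τ : ℝ)
    {x x' : ℝ → E} (hx : Continuous x) (hx' : Continuous x')
    (hd : ∀ t, HasDerivAt x (x' t) t) (t : ℝ) :
    HasDerivAt (histSegment τ x hx) (histSegment τ x' hx' t) t := by
  rw [hasDerivAt_iff_isLittleO, Asymptotics.isLittleO_iff]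
  intro ε hε
  obtain ⟨δ, hδ, hclose⟩ :=
    Metric.continuousAt_iff.mp ((continuous_histSegment τ hx').continuousAt (x := t)) ε hε
  filter_upwards [ball_mem_nhds t hδ] with s hs
  refine (ContinuousMap.norm_le _ (by positivity)).mpr fun θ => ?_
  have hderiv : ∀ u ∈ ball t δ,
      HasDerivWithinAt (fun u => x (u + θ)) (x' (u + θ)) (ball t δ) u := fun u _ =>
    ((hd (u + θ)).comp_add_const u θ).hasDerivWithinAt
  have hbound : ∀ u ∈ ball t δ, ‖x' (u + θ) - x' (t + θ)‖ ≤ ε := fun u hu => by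
    have h := (ContinuousMap.dist_apply_le_dist θ).trans (hclose hu).le
    simpa [histSegment, add_comm, dist_eq_norm] using h
  simpa [histSegment, add_comm] using
    (convex_ball t δ).norm_image_sub_sub_smul_le_of_norm_hasDerivWithin_sub_le hderiv hbound
      (mem_ball_self hδ) hs

theorem statement6_general (E : Type*) [NormedAddCommGroup E] [NormedSpace ℝ E]
    (τ : ℝ)
    (x x' : ℝ → E) (hx : Continuous x) (hx' : Continuous x')
    (hd : ∀ t : ℝ, HasDerivAt x (x' t) t)
    (H : C(Set.Icc (-τ) (0 : ℝ), E) → ℝ)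
    (DH : C(Set.Icc (-τ) (0 : ℝ), E) → (C(Set.Icc (-τ) (0 : ℝ), E) →L[ℝ] ℝ))
    (hH : ∀ φ : C(Set.Icc (-τ) (0 : ℝ), E), HasFDerivAt H (DH φ) φ) :
    ∀ t : ℝ, HasDerivAt (fun s => H (histSegment τ x hx s))
      (DH (histSegment τ x hx t) (histSegment τ x' hx' t)) t := fun t =>
  (hH _).comp_hasDerivAt t (hasDerivAt_histSegment τ hx hx' hd t)

/-- Theorem 4 (chain-rule form): for a continuously differentiable `x : ℝ → E` and a
Fréchet differentiable functional `𝓗 : C([-τ,0], E) → ℝ` (sup norm), the function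
`t ↦ 𝓗(x_t)` is differentiable with derivative `D𝓗(x_t)(ẋ_t)`. -/
theorem statement6 (E : Type*) [NormedAddCommGroup E] [NormedSpace ℝ E] [CompleteSpace E]
    (τ : ℝ) (hτ : 0 < τ)
    (x x' : ℝ → E) (hx : Continuous x) (hx' : Continuous x')
    (hd : ∀ t : ℝ, HasDerivAt x (x' t) t)
    (H : C(Set.Icc (-τ) (0 : ℝ), E) → ℝ)
    (DH : C(Set.Icc (-τ) (0 : ℝ), E) → (C(Set.Icc (-τ) (0 : ℝ), E) →L[ℝ] ℝ))
    (hH : ∀ φ : C(Set.Icc (-τ) (0 : ℝ), E), HasFDerivAt H (DH φ) φ) :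
    ∀ t : ℝ, HasDerivAt (fun s => H (histSegment τ x hx s))
      (DH (histSegment τ x hx t) (histSegment τ x' hx' t)) t :=
  statement6_general E τ x x' hx hx' hd H DH hH
end
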